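/- The map sending a strongly irreducible ideal I to H(I) = {J ∈ S(M) : I ⊆ J} restricts to a bijection between the set of minimal elements of S(M) (strongly irreducible ideals of M that contain no strictly smaller strongly irreducible ideal) and the set of irreducible components of the terminal space S(M) (maximal irreducible subsets of the terminal space). -/

import Mathlib

/-- An ideal of a commutative monoid `M`: a subset closed under
multiplication by arbitrary elements of `M`. -/
def IsIdealM {M : Type*} [CommMonoid M] (I : Set M) : Prop :=
  ∀ x ∈ I, ∀ m : M, x * m ∈ I

/-- A strongly irreducible ideal: a proper ideal `I` such that for all ideals
`J`, `K`, if `J ∩ K ⊆ I` then `J ⊆ I` or `K ⊆ I`. -/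
def IsStronglyIrr {M : Type*} [CommMonoid M] (I : Set M) : Prop :=
  IsIdealM I ∧ I ≠ Set.univ ∧
    ∀ J K : Set M, IsIdealM J → IsIdealM K → J ∩ K ⊆ I → J ⊆ I ∨ K ⊆ I

/-- A prime ideal of a commutative monoid. -/
def IsPrimeIdealM {M : Type*} [CommMonoid M] (P : Set M) : Prop :=
  IsIdealM P ∧ P ≠ Set.univ ∧ ∀ x y : M, x * y ∈ P → x ∈ P ∨ y ∈ P

/-- A maximal ideal of a commutative monoid: a proper ideal maximal among
proper ideals. -/
def IsMaximalIdealM {M : Type*} [CommMonoid M] (I : Set M) : Prop :=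
  IsIdealM I ∧ I ≠ Set.univ ∧
    ∀ J : Set M, IsIdealM J → J ≠ Set.univ → I ⊆ J → J = I

/-- `SIr M` is the set (type) of strongly irreducible ideals of `M`. -/
structure SIr (M : Type*) [CommMonoid M] where
  carrier : Set M
  strongly_irr : IsStronglyIrr carrier

namespace SIr

variable {M : Type*} [CommMonoid M]

@[ext] theorem ext {I J : SIr M} (h : I.carrier = J.carrier) : I = J := by
  cases I; cases J; simpa using h

/-- `KK X = ⋂_{I ∈ X} I`, the kernel of a set of strongly irreducible ideals. -/
def KK (X : Set (SIr M)) : Set M := ⋂ I ∈ X, I.carrier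

/-- The hull-kernel operator `HK`: for nonempty `X`,
`HK X = {J ∈ S(M) : K(X) ⊆ J}`, and `HK ∅ = ∅`. -/
def HK (X : Set (SIr M)) : Set (SIr M) :=
  {J : SIr M | X.Nonempty ∧ KK X ⊆ J.carrier}

theorem HK_empty : HK (∅ : Set (SIr M)) = ∅ := by
  ext J
  simp [HK, Set.not_nonempty_empty]

theorem mem_HK_of_nonempty {X : Set (SIr M)} (hX : X.Nonempty) {J : SIr M} :
    J ∈ HK X ↔ KK X ⊆ J.carrier :=
  ⟨fun h => h.2, fun h => ⟨hX, h⟩⟩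

theorem KK_antitone {X X' : Set (SIr M)} (h : X ⊆ X') : KK X' ⊆ KK X := by
  intro m hm
  simp only [KK, Set.mem_iInter] at hm ⊢
  exact fun I hI => hm I (h hI)

theorem KK_isIdeal (X : Set (SIr M)) : IsIdealM (KK X) := by
  intro x hx m
  simp only [KK, Set.mem_iInter] at hx ⊢
  exact fun I hI => I.strongly_irr.1 x (hx I hI) m

theorem subset_HK (X : Set (SIr M)) : X ⊆ HK X := by
  intro J hJ
  refine ⟨⟨J, hJ⟩, fun m hm => ?_⟩
  simp only [KK, Set.mem_iInter] at hm
  exact hm J hJ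

theorem HK_mono {X X' : Set (SIr M)} (h : X ⊆ X') : HK X ⊆ HK X' := by
  rintro J ⟨hne, hsub⟩
  exact ⟨hne.mono h, (KK_antitone h).trans hsub⟩

theorem HK_idem (X : Set (SIr M)) : HK (HK X) = HK X := by
  refine Set.Subset.antisymm ?_ (subset_HK _)
  rintro J ⟨hne, hsub⟩
  obtain ⟨I, hI⟩ := hne
  refine ⟨hI.1, Set.Subset.trans ?_ hsub⟩
  intro m hm
  simp only [KK, Set.mem_iInter]
  exact fun L hL => hL.2 hm

theorem HK_union (X X' : Set (SIr M)) : HK (X ∪ X') = HK X ∪ HK X' := by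
  rcases X.eq_empty_or_nonempty with rfl | hX
  · rw [Set.empty_union, HK_empty, Set.empty_union]
  rcases X'.eq_empty_or_nonempty with rfl | hX'
  · rw [Set.union_empty, HK_empty, Set.union_empty]
  refine Set.Subset.antisymm ?_
    (Set.union_subset (HK_mono Set.subset_union_left)
      (HK_mono Set.subset_union_right))
  rintro J ⟨-, hsub⟩
  have hKK : KK X ∩ KK X' ⊆ J.carrier := by
    refine Set.Subset.trans ?_ hsub
    intro m hm
    simp only [KK, Set.mem_iInter, Set.mem_inter_iff] at hm ⊢
    rintro I (hI | hI)
    · exact hm.1 I hI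
    · exact hm.2 I hI
  rcases J.strongly_irr.2.2 (KK X) (KK X') (KK_isIdeal X) (KK_isIdeal X') hKK with h | h
  · exact Or.inl ⟨hX, h⟩
  · exact Or.inr ⟨hX', h⟩

/-- The terminal-space (Zariski) topology on `SIr M`: the closed sets are
exactly the sets of the form `HK X`. -/
instance instTopologicalSpace : TopologicalSpace (SIr M) :=
  TopologicalSpace.ofClosed (Set.range HK)
    ⟨∅, HK_empty⟩
    (fun A hA => by
      refine ⟨⋂₀ A, Set.Subset.antisymm (Set.subset_sInter fun C hC => ?_) (subset_HK _)⟩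
      obtain ⟨Y, hY⟩ := hA hC
      calc HK (⋂₀ A) ⊆ HK C := HK_mono (Set.sInter_subset_of_mem hC)
        _ = HK (HK Y) := by rw [hY]
        _ = HK Y := HK_idem Y
        _ = C := hY)
    (fun A hA B hB => by
      obtain ⟨Y, hY⟩ := hA
      obtain ⟨Z, hZ⟩ := hB
      exact ⟨Y ∪ Z, by rw [HK_union, hY, hZ]⟩)

theorem isClosed_iff {C : Set (SIr M)} : IsClosed C ↔ ∃ X, HK X = C := by
  rw [← isOpen_compl_iff]
  show Cᶜᶜ ∈ Set.range HK ↔ _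
  rw [compl_compl]
  exact Iff.rfl

end SIr

/-!
The terminal space is T₀ and quasi-sober: the closure of `{I}` is `H(I)`, so specialization is
inclusion, and a closed irreducible set `S` is `H(K(S))` with `K(S)` strongly irreducible, since
`A ∩ B ⊆ K(S)` puts `S` inside the union of the closed sets `H(A)` and `H(B)`. In any T₀
quasi-sober space, `x ↦ closure {x}` maps the points minimal for specialization bijectively onto
the irreducible components.
-/

section Sober

variable {X : Type*} [TopologicalSpace X]

theorem closure_singleton_mem_irreducibleComponents [QuasiSober X] {x : X}
    (hx : ∀ y, y ⤳ x → y = x) : closure {x} ∈ irreducibleComponents X := by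
  refine ⟨isIrreducible_singleton.closure, fun t ht hxt => ?_⟩
  have hgen := ht.isGenericPoint_genericPoint_closure
  have hx_eq : ht.genericPoint = x :=
    hx _ (hgen.specializes (subset_closure (hxt (subset_closure (Set.mem_singleton x)))))
  rw [← hx_eq, hgen.def]
  exact subset_closure

theorem specializes_imp_eq_of_mem_irreducibleComponents [T0Space X] {x : X}
    (hx : closure {x} ∈ irreducibleComponents X) {y : X} (hyx : y ⤳ x) : y = x := by
  have hsub : closure {x} ⊆ closure {y} := specializes_iff_closure_subset.1 hyx
  have hgen : IsGenericPoint y (closure {x}) :=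
    (hx.2 isIrreducible_singleton.closure hsub).antisymm hsub
  exact hgen.eq isGenericPoint_closure

theorem bijOn_closure_singleton_irreducibleComponents [T0Space X] [QuasiSober X] :
    Set.BijOn (fun x : X => closure {x}) {x | ∀ y, y ⤳ x → y = x}
      (irreducibleComponents X) := by
  refine ⟨fun x hx => closure_singleton_mem_irreducibleComponents hx,
    fun x _ y _ hxy => IsGenericPoint.eq (S := closure {y}) hxy isGenericPoint_closure,
    fun C hC => ?_⟩
  have hgen := hC.1.isGenericPoint_genericPoint (isClosed_of_mem_irreducibleComponents C hC)
  refine ⟨_, fun y => specializes_imp_eq_of_mem_irreducibleComponents ?_, hgen⟩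
  rwa [hgen.def]

end Sober

namespace SIr

variable {M : Type*} [CommMonoid M]

/-- The paper's `H(J)`. -/
def hull (J : Set M) : Set (SIr M) := {L | J ⊆ L.carrier}

theorem subset_KK_hull (J : Set M) : J ⊆ KK (hull J) :=
  Set.subset_iInter₂ fun _ hL => hL

theorem KK_subset_of_mem {X : Set (SIr M)} {I : SIr M} (hI : I ∈ X) : KK X ⊆ I.carrier :=
  Set.biInter_subset_of_mem hI

theorem HK_eq_hull_KK {X : Set (SIr M)} (hX : X.Nonempty) : HK X = hull (KK X) :=
  Set.ext fun _ => mem_HK_of_nonempty hX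

theorem isClosed_hull (J : Set M) : IsClosed (hull J) := by
  rcases (hull J).eq_empty_or_nonempty with h | h
  · exact isClosed_iff.2 ⟨∅, by rw [HK_empty, h]⟩
  · refine isClosed_iff.2 ⟨hull J, (subset_HK _).antisymm' ?_⟩
    rw [HK_eq_hull_KK h]
    exact fun L hL => (subset_KK_hull J).trans hL

theorem closure_eq_HK (Y : Set (SIr M)) : closure Y = HK Y := by
  refine (closure_minimal (subset_HK Y) (isClosed_iff.2 ⟨Y, rfl⟩)).antisymm ?_
  obtain ⟨X, hX⟩ := isClosed_iff.1 (isClosed_closure (s := Y))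
  calc HK Y ⊆ HK (HK X) := HK_mono (hX ▸ subset_closure)
    _ = closure Y := by rw [HK_idem, hX]

theorem closure_singleton (I : SIr M) : closure {I} = hull I.carrier := by
  rw [closure_eq_HK, HK_eq_hull_KK (Set.singleton_nonempty I), KK, Set.biInter_singleton]

theorem specializes_iff {I J : SIr M} : I ⤳ J ↔ I.carrier ⊆ J.carrier := by
  rw [specializes_iff_mem_closure, closure_singleton]
  rfl

instance : T0Space (SIr M) :=
  (t0Space_iff_inseparable _).2 fun _ _ h =>
    ext ((specializes_iff.1 h.specializes).antisymm (specializes_iff.1 h.specializes'))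

theorem isStronglyIrr_KK {S : Set (SIr M)} (hS : IsIrreducible S) : IsStronglyIrr (KK S) := by
  obtain ⟨I, hI⟩ := hS.nonempty
  refine ⟨KK_isIdeal S, fun h => I.strongly_irr.2.1 ?_, fun A B hA hB hAB => ?_⟩
  · exact Set.eq_univ_of_univ_subset (h ▸ KK_subset_of_mem hI)
  have hcover : S ⊆ hull A ∪ hull B := fun L hL =>
    L.strongly_irr.2.2 A B hA hB (hAB.trans (KK_subset_of_mem hL))
  rcases isPreirreducible_iff_isClosed_union_isClosed.1 hS.2 _ _
      (isClosed_hull A) (isClosed_hull B) hcover with h | h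
  · exact Or.inl fun x hx => Set.mem_iInter₂.2 fun L hL => h hL hx
  · exact Or.inr fun x hx => Set.mem_iInter₂.2 fun L hL => h hL hx

instance : QuasiSober (SIr M) where
  sober {S} hS hS_closed := by
    refine ⟨⟨KK S, isStronglyIrr_KK hS⟩, ?_⟩
    rw [isGenericPoint_def, closure_singleton, ← HK_eq_hull_KK hS.nonempty, ← closure_eq_HK,
      hS_closed.closure_eq]

end SIr

/-- `I ↦ H(I) = {J ∈ S(M) : I ⊆ J}` is a bijection from the set
of minimal strongly irreducible ideals onto the set of irreducible components
of the terminal space. -/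
theorem minimal_bijOn_irreducibleComponents (M : Type*) [CommMonoid M] :
    Set.BijOn (fun I : SIr M => {J : SIr M | I.carrier ⊆ J.carrier})
      {I : SIr M | ∀ J : SIr M, J.carrier ⊆ I.carrier → J = I}
      (irreducibleComponents (SIr M)) := by
  simpa only [SIr.closure_singleton, SIr.hull, SIr.specializes_iff] using
    bijOn_closure_singleton_irreducibleComponents (X := SIr M)
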